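/- arXiv:2504.04312 — 2 statements merged into one kernel-verified Lean document; each statement's English description precedes it below -/
import Mathlib

section
/- The PPTA function μ is monotonically increasing on [0, T]; its initial value satisfies μ(0) = 1; and μ(t) = ((π + 2)/π)·T/(T − T*) for all t ≥ T. In particular μ(t) ≥ 1 for all t ≥ 0. -/
/- On `[0, T*]` the function is the prescribed-time gain `T / (T - t)`, which is increasing; on
`[T*, T]` it is a quarter sine wave rising from `μ_p(T*)` to `((π + 2)/π)·μ_p(T*)`, so the two
pieces glue continuously at `T*` and monotonicity on `[0, T]` follows piecewise. Since `μ` is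
constant from `T` on, `μ ≥ 1` follows from `μ(0) = 1` and monotonicity on `[0, T]`. -/

/-- The saturated prescribed-time adjustment (PPTA) function `μ` with
parameters `T` and `Ts` (denoted `T*` in the paper). -/
noncomputable def mu (T Ts : ℝ) (t : ℝ) : ℝ :=
  if t ≤ Ts then T / (T - t)
  else if t < T then
    (T / (T - Ts)) * (1 + (2 / Real.pi) * Real.sin ((Real.pi / 2) * ((t - Ts) / (T - Ts))))
  else ((Real.pi + 2) / Real.pi) * (T / (T - Ts))

open Real Set

noncomputable def muRamp (T Ts t : ℝ) : ℝ :=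
  T / (T - Ts) * (1 + 2 / π * sin (π / 2 * ((t - Ts) / (T - Ts))))

section

variable {T Ts t : ℝ}

lemma mu_of_le (ht : t ≤ Ts) : mu T Ts t = T / (T - t) := if_pos ht

lemma mu_of_ge (hT : Ts < T) (ht : T ≤ t) :
    mu T Ts t = (π + 2) / π * (T / (T - Ts)) := by
  rw [mu, if_neg (by linarith), if_neg (by linarith)]

lemma muRamp_left : muRamp T Ts Ts = T / (T - Ts) := by
  simp [muRamp]

lemma muRamp_right (hT : Ts < T) : muRamp T Ts T = (π + 2) / π * (T / (T - Ts)) := by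
  rw [muRamp, div_self (sub_pos.2 hT).ne', mul_one, sin_pi_div_two]
  field_simp

lemma mu_eq_muRamp (hT : Ts < T) (ht : t ∈ Icc Ts T) : mu T Ts t = muRamp T Ts t := by
  obtain rfl | hlt := ht.1.eq_or_lt
  · rw [mu_of_le le_rfl, muRamp_left]
  obtain rfl | hlt' := ht.2.eq_or_lt
  · rw [mu_of_ge hT le_rfl, muRamp_right hT]
  rw [mu, if_neg hlt.not_ge, if_pos hlt', muRamp]

lemma monotoneOn_div_sub_self (hT : 0 ≤ T) : MonotoneOn (fun t ↦ T / (T - t)) (Iio T) := by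
  intro x _ y hy hxy
  have : 0 < T - y := sub_pos.2 hy
  dsimp only
  gcongr

lemma monotoneOn_sin_quarter_wave {a b : ℝ} (hab : a < b) :
    MonotoneOn (fun t ↦ sin (π / 2 * ((t - a) / (b - a)))) (Icc a b) := by
  have hba : 0 < b - a := sub_pos.2 hab
  have hphase : MonotoneOn (fun t ↦ π / 2 * ((t - a) / (b - a))) (Icc a b) := by
    intro x _ y _ hxy
    dsimp only
    gcongr
  refine strictMonoOn_sin.monotoneOn.comp hphase fun t ht ↦ ⟨?_, ?_⟩
  · have : 0 ≤ (t - a) / (b - a) := div_nonneg (by linarith [ht.1]) hba.le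
    nlinarith [pi_pos]
  · have : (t - a) / (b - a) ≤ 1 := (div_le_one hba).2 (by linarith [ht.2])
    nlinarith [pi_pos]

lemma monotoneOn_muRamp (hTs : 0 ≤ Ts) (hT : Ts < T) : MonotoneOn (muRamp T Ts) (Icc Ts T) := by
  have hgain : 0 ≤ T / (T - Ts) := div_nonneg (by linarith) (by linarith)
  intro x hx y hy hxy
  have := monotoneOn_sin_quarter_wave hT hx hy hxy
  unfold muRamp
  gcongr

lemma monotoneOn_mu (hTs : 0 ≤ Ts) (hT : Ts < T) : MonotoneOn (mu T Ts) (Icc 0 T) := by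
  rw [← Icc_union_Icc_eq_Icc hTs hT.le]
  refine MonotoneOn.union_right ?_ ?_ (isGreatest_Icc hTs) (isLeast_Icc hT.le)
  · exact ((monotoneOn_div_sub_self (by linarith)).mono fun t ht ↦ ht.2.trans_lt hT).congr
      fun t ht ↦ (mu_of_le ht.2).symm
  · exact (monotoneOn_muRamp hTs hT).congr fun t ht ↦ (mu_eq_muRamp hT ht).symm

end

/-- `μ` is monotonically increasing on `[0, T]`, satisfies `μ(0) = 1`,
equals `((π + 2)/π)·T/(T − T*)` for all `t ≥ T`, and in particular `μ(t) ≥ 1`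
for all `t ≥ 0`. -/
theorem mu_monotone_initial_final (T Ts : ℝ) (hTs : 0 < Ts) (hT : Ts < T) :
    MonotoneOn (mu T Ts) (Set.Icc 0 T) ∧
      mu T Ts 0 = 1 ∧
      (∀ t ≥ T, mu T Ts t = ((Real.pi + 2) / Real.pi) * (T / (T - Ts))) ∧
      (∀ t ≥ (0 : ℝ), 1 ≤ mu T Ts t) := by
  have hmono := monotoneOn_mu hTs.le hT
  have hT0 : T ∈ Icc 0 T := ⟨by linarith, le_rfl⟩
  have hinit : mu T Ts 0 = 1 := by
    rw [mu_of_le hTs.le, sub_zero, div_self (by linarith)]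
  refine ⟨hmono, hinit, fun t ↦ mu_of_ge hT, fun t ht ↦ ?_⟩
  rw [← hinit]
  rcases le_total t T with htT | hTt
  · exact hmono (left_mem_Icc.2 hT0.1) ⟨ht, htT⟩ ht
  · rw [mu_of_ge hT hTt, ← mu_of_ge hT le_rfl]
    exact hmono (left_mem_Icc.2 hT0.1) hT0 hT0.1
end

section
/- If V : [0, ∞) → ℝ is differentiable and nonnegative and satisfies the differential inequality V′(t) ≤ −α·μ(t)·V(t) + β for all t ≥ 0, where α > 1/T and β ≥ 0, then for every t ≥ T* it holds that V(t) ≤ max{v₁, v₂}, where v₁ = ((T − T*)/T)^{αT}·V(0) + (βT/(αT − 1))·[ (T − T*)/T − ((T − T*)/T)^{αT} ] and v₂ = β(T − T*)/(αT). -/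
/-!
On `[0, T*]` the inequality reads `V' ≤ -(p / (T - t)) V + β` with `p = αT`, which has the
particular solution `β (T - t) / (p - 1)` and the integrating factor `(T - t)^(-p)`; this gives
`V(T*) ≤ v₁`. From `T*` on, `μ ≥ T / (T - T*)` and `V ≥ 0` give `V' ≤ -c V + β` with
`c = p / (T - T*)`, and the integrating factor `exp (c t)` shows that `V` never rises above
`max (V T*) (β / c)`, where `β / c = v₂`.
-/

open Set

theorem antitoneOn_mul_of_hasDerivWithinAt_le_neg_mul {D : Set ℝ} (hD : Convex ℝ D)
    {U U' E k : ℝ → ℝ} (hU : ∀ x ∈ D, HasDerivWithinAt U (U' x) D x)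
    (hE : ∀ x ∈ D, HasDerivWithinAt E (k x * E x) D x) (hE₀ : ∀ x ∈ D, 0 ≤ E x)
    (hUk : ∀ x ∈ D, U' x ≤ -(k x * U x)) :
    AntitoneOn (fun x => U x * E x) D := by
  refine antitoneOn_of_hasDerivWithinAt_nonpos hD
    (f' := fun x => U' x * E x + U x * (k x * E x))
    (fun x hx => ((hU x hx).mul (hE x hx)).continuousWithinAt)
    (fun x hx => ((hU x (interior_subset hx)).mul (hE x (interior_subset hx))).mono
      interior_subset) fun x hx => ?_
  have hx' := interior_subset hx
  calc U' x * E x + U x * (k x * E x) = (U' x + k x * U x) * E x := by ring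
    _ ≤ 0 := mul_nonpos_of_nonpos_of_nonneg (by linarith [hUk x hx']) (hE₀ x hx')

theorem le_mul_div_of_hasDerivWithinAt_le_neg_mul {a b : ℝ} (hab : a ≤ b)
    {U U' E k : ℝ → ℝ}
    (hU : ∀ x ∈ Icc a b, HasDerivWithinAt U (U' x) (Icc a b) x)
    (hE : ∀ x ∈ Icc a b, HasDerivWithinAt E (k x * E x) (Icc a b) x)
    (hE₀ : ∀ x ∈ Icc a b, 0 < E x) (hUk : ∀ x ∈ Icc a b, U' x ≤ -(k x * U x)) :
    U b ≤ U a * (E a / E b) := by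
  rw [mul_div_assoc', le_div_iff₀ (hE₀ b ⟨hab, le_rfl⟩)]
  exact antitoneOn_mul_of_hasDerivWithinAt_le_neg_mul (convex_Icc a b) hU hE
    (fun x hx => (hE₀ x hx).le) hUk ⟨le_rfl, hab⟩ ⟨hab, le_rfl⟩ hab

theorem le_of_hasDerivWithinAt_le_neg_div_sub_mul_add {T τ p β : ℝ} (hτ : 0 ≤ τ)
    (hτT : τ < T) (hp : p ≠ 1) {V V' : ℝ → ℝ}
    (hV : ∀ t ∈ Icc 0 τ, HasDerivWithinAt V (V' t) (Icc 0 τ) t)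
    (hineq : ∀ t ∈ Icc 0 τ, V' t ≤ -(p / (T - t)) * V t + β) :
    V τ ≤ ((T - τ) / T) ^ p * V 0 + β * T / (p - 1) * ((T - τ) / T - ((T - τ) / T) ^ p) := by
  have hT : 0 < T := hτ.trans_lt hτT
  have hp1 : p - 1 ≠ 0 := sub_ne_zero.mpr hp
  have hsT : ∀ t ∈ Icc 0 τ, 0 < T - t := fun t ht => sub_pos.mpr (ht.2.trans_lt hτT)
  have hE : ∀ t ∈ Icc 0 τ, HasDerivWithinAt (fun t => (T - t) ^ (-p))
      (p / (T - t) * (T - t) ^ (-p)) (Icc 0 τ) t := by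
    intro t ht
    have h : HasDerivAt (fun s => (T - s) ^ (-p)) (-1 * -p * (T - t) ^ (-p - 1)) t :=
      ((hasDerivAt_id' t).const_sub T).rpow_const (Or.inl (hsT t ht).ne')
    refine (h.congr_deriv ?_).hasDerivWithinAt
    rw [Real.rpow_sub_one (hsT t ht).ne']
    ring
  -- `β (T - t) / (p - 1)` is a particular solution of `W' = -(p / (T - t)) W + β`.
  have key := le_mul_div_of_hasDerivWithinAt_le_neg_mul hτ
    (U := fun t => V t - β * (T - t) / (p - 1))
    (fun t ht => (hV t ht).sub
      ((((hasDerivAt_id t).const_sub T).const_mul β).div_const (p - 1)).hasDerivWithinAt)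
    hE (fun t ht => Real.rpow_pos_of_pos (hsT t ht) _) fun t ht => by
      have hW : p / (T - t) * (β * (T - t) / (p - 1)) = β - β * (-1) / (p - 1) := by
        field_simp [(hsT t ht).ne']
        ring
      rw [mul_sub]
      linarith [hineq t ht]
  have hratio : T ^ (-p) / (T - τ) ^ (-p) = ((T - τ) / T) ^ p := by
    rw [Real.rpow_neg hT.le, Real.rpow_neg (hsT τ ⟨hτ, le_rfl⟩).le, inv_div_inv,
      Real.div_rpow (hsT τ ⟨hτ, le_rfl⟩).le hT.le]
  have hW : β * T / (p - 1) * ((T - τ) / T) = β * (T - τ) / (p - 1) := by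
    field_simp
  simp only [sub_zero, hratio] at key
  linarith

theorem le_max_of_hasDerivWithinAt_le_neg_mul_add {a b c β : ℝ} (hab : a ≤ b) (hc : 0 < c)
    {V V' : ℝ → ℝ} (hV : ∀ t ∈ Icc a b, HasDerivWithinAt V (V' t) (Icc a b) t)
    (hineq : ∀ t ∈ Icc a b, V' t ≤ -c * V t + β) :
    V b ≤ max (V a) (β / c) := by
  have hE : ∀ t ∈ Icc a b, HasDerivWithinAt (fun t => Real.exp (c * t))
      (c * Real.exp (c * t)) (Icc a b) t := fun t _ =>
    (((hasDerivAt_id' t).const_mul c).exp.congr_deriv (by ring)).hasDerivWithinAt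
  have key := le_mul_div_of_hasDerivWithinAt_le_neg_mul hab (U := fun t => V t - β / c)
    (fun t ht => (hV t ht).sub_const _) hE (fun t _ => Real.exp_pos (c * t)) fun t ht => by
      have : c * (β / c) = β := mul_div_cancel₀ β hc.ne'
      linarith [hineq t ht]
  have hdecay : Real.exp (c * a) / Real.exp (c * b) ≤ 1 :=
    div_le_one_of_le₀ (Real.exp_le_exp.mpr (by nlinarith)) (Real.exp_pos _).le
  rcases le_total (V a) (β / c) with h | h
  · have := mul_nonpos_of_nonpos_of_nonneg (sub_nonpos.mpr h) (by positivity :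
      0 ≤ Real.exp (c * a) / Real.exp (c * b))
    exact le_max_of_le_right (by linarith)
  · have := mul_le_of_le_one_right (sub_nonneg.mpr h) hdecay
    exact le_max_of_le_left (by linarith)

theorem div_sub_le_mu {T Ts t : ℝ} (hT₀ : 0 ≤ T) (hT : Ts < T) (ht : Ts ≤ t) :
    T / (T - Ts) ≤ mu T Ts t := by
  have hA : 0 < T - Ts := sub_pos.mpr hT
  have hμ₀ : 0 ≤ T / (T - Ts) := div_nonneg hT₀ hA.le
  unfold mu
  split_ifs with hTs htT
  · rw [le_antisymm hTs ht]
  · refine le_mul_of_one_le_right hμ₀ (le_add_of_nonneg_right (mul_nonneg (by positivity)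
      (Real.sin_nonneg_of_nonneg_of_le_pi (by positivity) ?_)))
    have : (t - Ts) / (T - Ts) ≤ 1 := (div_le_one hA).mpr (by linarith)
    nlinarith [Real.pi_pos]
  · exact le_mul_of_one_le_left hμ₀ ((one_le_div Real.pi_pos).mpr (by linarith))

theorem practical_prescribed_time_stability_general
    (T Ts α β : ℝ) (hTs : 0 < Ts) (hT : Ts < T) (hα : 1 / T < α)
    (V V' : ℝ → ℝ)
    (hV : ∀ t ∈ Set.Ici (0 : ℝ), HasDerivWithinAt V (V' t) (Set.Ici 0) t)
    (hVnonneg : ∀ t ∈ Set.Ici (0 : ℝ), 0 ≤ V t)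
    (hineq : ∀ t ∈ Set.Ici (0 : ℝ), V' t ≤ -α * mu T Ts t * V t + β) :
    ∀ t ≥ Ts,
      V t ≤ max
        (((T - Ts) / T) ^ (α * T) * V 0 +
          (β * T / (α * T - 1)) * ((T - Ts) / T - ((T - Ts) / T) ^ (α * T)))
        (β * (T - Ts) / (α * T)) := by
  intro t ht
  have hT₀ : 0 < T := hTs.trans hT
  have hα₀ : 0 < α := (one_div_pos.mpr hT₀).trans hα
  have hp : 1 < α * T := by rwa [div_lt_iff₀ hT₀] at hα
  have hV₁ : V Ts ≤ ((T - Ts) / T) ^ (α * T) * V 0 +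
      (β * T / (α * T - 1)) * ((T - Ts) / T - ((T - Ts) / T) ^ (α * T)) := by
    refine le_of_hasDerivWithinAt_le_neg_div_sub_mul_add hTs.le hT hp.ne'
      (fun s hs => (hV s hs.1).mono fun _ h => h.1) fun s hs => ?_
    have := hineq s hs.1
    rwa [mu, if_pos hs.2, mul_div_assoc', neg_mul, neg_div] at this
  have hc : 0 < α * T / (T - Ts) := div_pos (by linarith) (sub_pos.mpr hT)
  have hV₂ := le_max_of_hasDerivWithinAt_le_neg_mul_add (β := β) ht hc
    (fun s hs => (hV s (hTs.le.trans hs.1)).mono fun _ h => hTs.le.trans h.1) fun s hs => by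
      have h₀ : 0 ≤ s := hTs.le.trans hs.1
      have hμ : α * T / (T - Ts) ≤ α * mu T Ts s := by
        rw [mul_div_assoc]
        exact mul_le_mul_of_nonneg_left (div_sub_le_mu hT₀.le hT hs.1) hα₀.le
      linarith [hineq s h₀, mul_le_mul_of_nonneg_right hμ (hVnonneg s h₀)]
  rw [div_div_eq_mul_div] at hV₂
  exact hV₂.trans (max_le_max_right _ hV₁)

/-- practical prescribed-time stability criterion (Lemma 1): if
`V′(t) ≤ −α·μ(t)·V(t) + β` for all `t ≥ 0`, with `α > 1/T`, `β ≥ 0`, then for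
every `t ≥ T*` we have `V(t) ≤ max{v₁, v₂}`. -/
theorem practical_prescribed_time_stability
    (T Ts α β : ℝ) (hTs : 0 < Ts) (hT : Ts < T) (hα : 1 / T < α) (hβ : 0 ≤ β)
    (V V' : ℝ → ℝ)
    (hV : ∀ t ∈ Set.Ici (0 : ℝ), HasDerivWithinAt V (V' t) (Set.Ici 0) t)
    (hVnonneg : ∀ t ∈ Set.Ici (0 : ℝ), 0 ≤ V t)
    (hineq : ∀ t ∈ Set.Ici (0 : ℝ), V' t ≤ -α * mu T Ts t * V t + β) :
    ∀ t ≥ Ts,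
      V t ≤ max
        (((T - Ts) / T) ^ (α * T) * V 0 +
          (β * T / (α * T - 1)) * ((T - Ts) / T - ((T - Ts) / T) ^ (α * T)))
        (β * (T - Ts) / (α * T)) :=
  practical_prescribed_time_stability_general T Ts α β hTs hT hα V V' hV hVnonneg hineq
end
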